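/- arXiv:1504.07066 — 2 statements merged into one kernel-verified Lean document; each statement's English description precedes it below -/
import Mathlib

section
/- Let T := max(s + p_max, ⌈(k·s + ∑_j p j)/m⌉). There exists an assignment σ : Fin n → Fin m with makespan(σ) ≤ T + s + p_max − 1; in particular, since T ≤ OPT, one has OPT ≤ T + s + p_max − 1 < 2T ≤ 2·OPT, so this greedy schedule is a 2-approximation. -/
open Finset

/-- Load of machine `i` under assignment `σ`: total processing time of jobs assigned
to `i` plus one setup of length `s` per distinct class appearing on `i`. -/
def mLoad {n m k : ℕ} (p : Fin n → ℕ) (c : Fin n → Fin k) (s : ℕ)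
    (σ : Fin n → Fin m) (i : Fin m) : ℕ :=
  (∑ j ∈ univ.filter (fun j => σ j = i), p j)
    + s * ((univ.filter (fun j => σ j = i)).image c).card

/-- Makespan of assignment `σ`. -/
def mMakespan {n m k : ℕ} (p : Fin n → ℕ) (c : Fin n → Fin k) (s : ℕ)
    (σ : Fin n → Fin m) : ℕ :=
  univ.sup (mLoad p c s σ)

/-- Optimal makespan: minimum over all assignments. -/
noncomputable def mOPT (n m k : ℕ) (p : Fin n → ℕ) (c : Fin n → Fin k) (s : ℕ) : ℕ :=
  sInf {M | ∃ σ : Fin n → Fin m, mMakespan p c s σ = M}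

/-!
Every schedule has makespan at least `s + p_max` (the longest job and its setup share a machine)
and at least `⌈(k·s + ∑ p)/m⌉` (each class is set up at least once), so `T ≤ OPT`.

For the upper bound, sort the jobs by class and lay them out in this order on one time line,
each job of length `p j`, plus `s` right after the last job of each class; the line has length at
most `k·s + ∑ p ≤ m·T`. Cut it into `m` windows of length `T` and assign each job to the window in
which it starts. A machine then receives a contiguous block of jobs `a, …, b`, and every class on
it other than that of `b` ends inside the block, so its setup is already on the line. Hence the
load is at most `(start b - start a) + p b + s ≤ (T - 1) + p_max + s`.
-/

section LowerBounds

variable {n m k : ℕ} (p : Fin n → ℕ) (c : Fin n → Fin k) (s : ℕ) (σ : Fin n → Fin m)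

lemma mLoad_le_mMakespan (i : Fin m) : mLoad p c s σ i ≤ mMakespan p c s σ :=
  le_sup (mem_univ i)

lemma add_le_mLoad (j : Fin n) : s + p j ≤ mLoad p c s σ (σ j) := by
  have hj : j ∈ univ.filter (fun j' => σ j' = σ j) := by simp
  have hclass : 1 ≤ #((univ.filter (fun j' => σ j' = σ j)).image c) :=
    card_pos.2 ⟨c j, mem_image_of_mem c hj⟩
  have hjob : p j ≤ ∑ j' ∈ univ.filter (fun j' => σ j' = σ j), p j' :=
    single_le_sum (fun _ _ => Nat.zero_le _) hj
  unfold mLoad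
  nlinarith

lemma add_sup_le_mMakespan (hn : 0 < n) : s + univ.sup p ≤ mMakespan p c s σ := by
  obtain ⟨j, -, hj⟩ := exists_mem_eq_sup univ ⟨⟨0, hn⟩, mem_univ _⟩ p
  rw [hj]
  exact (add_le_mLoad p c s σ j).trans (mLoad_le_mMakespan p c s σ _)

lemma sum_mLoad :
    ∑ i, mLoad p c s σ i =
      ∑ j, p j + s * ∑ i, #((univ.filter (fun j => σ j = i)).image c) := by
  simp only [mLoad, sum_add_distrib, sum_fiberwise, mul_sum]

lemma card_le_sum_card_image_fiber (hc : Function.Surjective c) :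
    k ≤ ∑ i, #((univ.filter (fun j => σ j = i)).image c) := by
  have hcover : (univ : Finset (Fin k)) ⊆
      univ.biUnion (fun i => (univ.filter (fun j => σ j = i)).image c) := by
    intro x _
    obtain ⟨j, rfl⟩ := hc x
    exact mem_biUnion.2 ⟨σ j, mem_univ _, mem_image_of_mem c (by simp)⟩
  calc k = #(univ : Finset (Fin k)) := by simp
    _ ≤ _ := card_le_card hcover
    _ ≤ _ := card_biUnion_le

lemma mul_add_sum_le_mul_mMakespan (hc : Function.Surjective c) :
    k * s + ∑ j, p j ≤ m * mMakespan p c s σ := by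
  have hsetups : k * s ≤ s * ∑ i, #((univ.filter (fun j => σ j = i)).image c) := by
    rw [mul_comm]
    exact Nat.mul_le_mul_left s (card_le_sum_card_image_fiber c σ hc)
  calc k * s + ∑ j, p j ≤ ∑ i, mLoad p c s σ i := by rw [sum_mLoad]; omega
    _ ≤ ∑ _i : Fin m, mMakespan p c s σ := sum_le_sum fun i _ => mLoad_le_mMakespan p c s σ i
    _ = m * mMakespan p c s σ := by simp

end LowerBounds

section OPT

variable {n m k : ℕ} (p : Fin n → ℕ) (c : Fin n → Fin k) (s : ℕ)

lemma mOPT_le_mMakespan (σ : Fin n → Fin m) : mOPT n m k p c s ≤ mMakespan p c s σ :=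
  Nat.sInf_le ⟨σ, rfl⟩

lemma exists_mMakespan_eq_mOPT (hm : 0 < m) :
    ∃ σ : Fin n → Fin m, mMakespan p c s σ = mOPT n m k p c s :=
  Nat.sInf_mem (s := {M | ∃ σ : Fin n → Fin m, mMakespan p c s σ = M}) ⟨_, fun _ => ⟨0, hm⟩, rfl⟩

end OPT

section Permutation

variable {n m k : ℕ} (p : Fin n → ℕ) (c : Fin n → Fin k) (s : ℕ) (σ : Fin n → Fin m)
  (e : Equiv.Perm (Fin n))

lemma mLoad_comp_perm (i : Fin m) : mLoad (p ∘ e) (c ∘ e) s (σ ∘ e) i = mLoad p c s σ i := by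
  have himage : (univ.filter (fun j => σ (e j) = i)).image (c ∘ e) =
      (univ.filter (fun j => σ j = i)).image c := by
    ext x
    simp only [mem_image, mem_filter, mem_univ, true_and, Function.comp_apply]
    constructor
    · rintro ⟨j, hj, rfl⟩
      exact ⟨e j, hj, rfl⟩
    · rintro ⟨j, hj, rfl⟩
      exact ⟨e.symm j, by simpa using hj, by simp⟩
  simp only [mLoad, Function.comp_apply, himage]
  rw [sum_equiv e (t := univ.filter (fun j => σ j = i)) (by simp) (fun _ _ => rfl)]

lemma mMakespan_comp_perm : mMakespan (p ∘ e) (c ∘ e) s (σ ∘ e) = mMakespan p c s σ := by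
  unfold mMakespan
  congr 1
  funext i
  exact mLoad_comp_perm p c s σ e i

end Permutation

section Greedy

variable {n k : ℕ} (p : Fin n → ℕ) (c : Fin n → Fin k) (s : ℕ)

def IsLastOfClass (t : Fin n) : Prop := ∀ u, c u = c t → u ≤ t

instance (t : Fin n) : Decidable (IsLastOfClass c t) :=
  inferInstanceAs (Decidable (∀ u, c u = c t → u ≤ t))

lemma exists_isLastOfClass (t : Fin n) : ∃ u, c u = c t ∧ t ≤ u ∧ IsLastOfClass c u := by
  obtain ⟨u, hu, hmax⟩ := exists_max_image (univ.filter (fun u => c u = c t)) id ⟨t, by simp⟩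
  have hcu : c u = c t := (mem_filter.1 hu).2
  exact ⟨u, hcu, hmax t (by simp), fun v hv => hmax v (by simp [hv, hcu])⟩

lemma card_filter_isLastOfClass_le : #(univ.filter (IsLastOfClass c)) ≤ k := by
  have hinj : Set.InjOn c (univ.filter (IsLastOfClass c) : Finset (Fin n)) := by
    intro t ht u hu htu
    simp only [coe_filter, mem_univ, true_and, Set.mem_ofPred_eq] at ht hu
    exact le_antisymm (hu t htu) (ht u htu.symm)
  simpa using card_le_card_of_injOn c (fun _ _ => mem_coe.2 (mem_univ _)) hinj

def greedyWeight (t : Fin n) : ℕ := p t + if IsLastOfClass c t then s else 0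

def greedyStart (t : Fin n) : ℕ := ∑ u ∈ Iio t, greedyWeight p c s u

lemma sum_greedyWeight (S : Finset (Fin n)) :
    ∑ t ∈ S, greedyWeight p c s t = ∑ t ∈ S, p t + s * #(S.filter (IsLastOfClass c)) := by
  simp only [greedyWeight]
  rw [sum_add_distrib, ← sum_filter, sum_const, smul_eq_mul, mul_comm]

lemma sum_greedyWeight_univ_le : ∑ t, greedyWeight p c s t ≤ k * s + ∑ t, p t := by
  have := Nat.mul_le_mul_left s (card_filter_isLastOfClass_le c)
  rw [sum_greedyWeight]
  linarith

lemma greedyStart_mono : Monotone (greedyStart p c s) := fun _ _ hab =>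
  sum_le_sum_of_subset (Iio_subset_Iio hab)

lemma greedyStart_add_sum_le {a b : Fin n} (hab : a ≤ b) {S : Finset (Fin n)}
    (hS : ∀ t ∈ S, a ≤ t ∧ t ≤ b) :
    greedyStart p c s a + ∑ t ∈ S, greedyWeight p c s t ≤
      greedyStart p c s b + greedyWeight p c s b := by
  have hdisj : Disjoint (Iio a) S :=
    disjoint_left.2 fun t hta htS => (mem_Iio.1 hta).not_ge (hS t htS).1
  have hsub : Iio a ∪ S ⊆ insert b (Iio b) := by
    rw [Iio_insert]
    intro t ht
    rcases mem_union.1 ht with hta | htS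
    · exact mem_Iic.2 ((mem_Iio.1 hta).le.trans hab)
    · exact mem_Iic.2 (hS t htS).2
  calc greedyStart p c s a + ∑ t ∈ S, greedyWeight p c s t
      = ∑ t ∈ Iio a ∪ S, greedyWeight p c s t := (sum_union hdisj).symm
    _ ≤ ∑ t ∈ insert b (Iio b), greedyWeight p c s t := sum_le_sum_of_subset hsub
    _ = greedyStart p c s b + greedyWeight p c s b := by
      rw [sum_insert notMem_Iio_self, add_comm, greedyStart]

lemma image_fiber_subset (hc : Monotone c) {m : ℕ} {σ : Fin n → Fin m} (hσ : Monotone σ)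
    {i : Fin m} {b : Fin n} (hb : σ b = i) (hmax : ∀ t, σ t = i → t ≤ b) :
    (univ.filter (fun t => σ t = i)).image c ⊆
      (insert b ((univ.filter (fun t => σ t = i)).filter (IsLastOfClass c))).image c := by
  intro x hx
  obtain ⟨t, ht, rfl⟩ := mem_image.1 hx
  have hti : σ t = i := (mem_filter.1 ht).2
  by_cases htb : c t = c b
  · exact mem_image.2 ⟨b, mem_insert_self _ _, htb.symm⟩
  obtain ⟨u, hcu, htu, hu⟩ := exists_isLastOfClass c t
  have hub : u ≤ b := by
    by_contra! hbu
    exact htb (le_antisymm (hc (hmax t hti)) (hcu ▸ hc hbu.le))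
  have hui : σ u = i := le_antisymm ((hσ hub).trans_eq hb) (hti ▸ hσ htu)
  exact mem_image.2 ⟨u, mem_insert_of_mem (by simp [hui, hu]), hcu⟩

def greedyMachine (T : ℕ) (t : Fin n) : ℕ := greedyStart p c s t / T

lemma greedyMachine_mono (T : ℕ) : Monotone (greedyMachine p c s T) := fun _ _ h =>
  Nat.div_le_div_right (greedyStart_mono p c s h)

lemma greedyStart_mem_window {T : ℕ} (hT : 0 < T) {t : Fin n} {i : ℕ}
    (ht : greedyMachine p c s T t = i) :
    i * T ≤ greedyStart p c s t ∧ greedyStart p c s t < i * T + T := by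
  rw [← ht, greedyMachine]
  have := Nat.lt_mul_div_succ (greedyStart p c s t) hT
  exact ⟨Nat.div_mul_le_self _ _, by linarith⟩

lemma greedyMachine_lt {m T : ℕ} (hp : ∀ t, 0 < p t) (hT : 0 < T)
    (htotal : k * s + ∑ t, p t ≤ m * T) (t : Fin n) : greedyMachine p c s T t < m := by
  have hw : 0 < greedyWeight p c s t := Nat.lt_of_lt_of_le (hp t) (Nat.le_add_right _ _)
  have hle : greedyStart p c s t + greedyWeight p c s t ≤ ∑ u, greedyWeight p c s u := by
    rw [greedyStart, add_comm, ← sum_insert notMem_Iio_self]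
    exact sum_le_sum_of_subset (subset_univ _)
  have := sum_greedyWeight_univ_le p c s
  rw [greedyMachine, Nat.div_lt_iff_lt_mul hT]
  omega

lemma mLoad_lt_of_greedy (hc : Monotone c) {m T pmax : ℕ} (hpmax : ∀ t, p t ≤ pmax)
    (hT : 0 < T) {σ : Fin n → Fin m} (hσ : ∀ t, (σ t : ℕ) = greedyMachine p c s T t)
    (i : Fin m) : mLoad p c s σ i < T + s + pmax := by
  set S := univ.filter (fun t => σ t = i) with hS_def
  rcases S.eq_empty_or_nonempty with hS | hS
  · simp only [mLoad, ← hS_def, hS, sum_empty, image_empty, card_empty, mul_zero]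
    omega
  obtain ⟨a, ha, hmin⟩ := S.exists_min_image id hS
  obtain ⟨b, hb, hmax⟩ := S.exists_max_image id hS
  simp only [id] at hmin hmax
  have hσS (t : Fin n) (ht : t ∈ S) : greedyMachine p c s T t = i := by
    rw [← hσ, (mem_filter.1 ht).2]
  have hstart_a := (greedyStart_mem_window p c s hT (hσS a ha)).1
  have hstart_b := (greedyStart_mem_window p c s hT (hσS b hb)).2
  have hσmono : Monotone σ := fun u v huv => by
    rw [← Fin.val_fin_le, hσ, hσ]
    exact greedyMachine_mono p c s T huv
  have hclasses : #(S.image c) ≤ #(insert b (S.filter (IsLastOfClass c))) :=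
    (card_le_card (image_fiber_subset c hc hσmono (mem_filter.1 hb).2
      fun t ht => hmax t (mem_filter.2 ⟨mem_univ t, ht⟩))).trans card_image_le
  have hsum := greedyStart_add_sum_le p c s (hmin b hb) fun t ht => ⟨hmin t ht, hmax t ht⟩
  rw [sum_greedyWeight] at hsum
  have hpb := hpmax b
  unfold greedyWeight at hsum
  unfold mLoad
  rw [← hS_def]
  by_cases hlast : IsLastOfClass c b
  · rw [insert_eq_of_mem (mem_filter.2 ⟨hb, hlast⟩)] at hclasses
    rw [if_pos hlast] at hsum
    have := Nat.mul_le_mul_left s hclasses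
    omega
  · rw [card_insert_of_notMem fun h => hlast (mem_filter.1 h).2] at hclasses
    rw [if_neg hlast] at hsum
    have := Nat.mul_le_mul_left s hclasses
    rw [mul_add_one] at this
    omega

lemma exists_mMakespan_lt_of_monotone (hc : Monotone c) {m T pmax : ℕ} (hp : ∀ t, 0 < p t)
    (hpmax : ∀ t, p t ≤ pmax) (hT : 0 < T) (htotal : k * s + ∑ t, p t ≤ m * T) :
    ∃ σ : Fin n → Fin m, mMakespan p c s σ < T + s + pmax :=
  ⟨fun t => ⟨greedyMachine p c s T t, greedyMachine_lt p c s hp hT htotal t⟩,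
    (Finset.sup_lt_iff (by simp only [bot_eq_zero']; omega)).2 fun i _ =>
      mLoad_lt_of_greedy p c s hc hpmax hT (fun _ => rfl) i⟩

end Greedy

theorem exists_mMakespan_lt {n m k : ℕ} (p : Fin n → ℕ) (c : Fin n → Fin k) (s : ℕ)
    {T pmax : ℕ} (hp : ∀ t, 0 < p t) (hpmax : ∀ t, p t ≤ pmax) (hT : 0 < T)
    (htotal : k * s + ∑ t, p t ≤ m * T) :
    ∃ σ : Fin n → Fin m, mMakespan p c s σ < T + s + pmax := by
  set e := Tuple.sort c
  obtain ⟨σ, hσ⟩ := exists_mMakespan_lt_of_monotone (p ∘ e) (c ∘ e) s (Tuple.monotone_sort c)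
    (fun t => hp (e t)) (fun t => hpmax (e t)) hT (by rwa [Function.comp_def, Equiv.sum_comp])
  refine ⟨σ ∘ e.symm, ?_⟩
  rwa [← mMakespan_comp_perm p c s _ e, Function.comp_assoc, e.symm_comp_self, Function.comp_id]

theorem greedy_two_approx_general (n m k s : ℕ) (hn : 1 ≤ n) (hm : 1 ≤ m)
    (p : Fin n → ℕ) (hp : ∀ j, 1 ≤ p j)
    (c : Fin n → Fin k) (hc : Function.Surjective c)
    (pmax T : ℕ) (hpmax : pmax = univ.sup p)
    (hT : T = max (s + pmax) ((k * s + ∑ j, p j + m - 1) / m)) :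
    (∃ σ : Fin n → Fin m, mMakespan p c s σ ≤ T + s + pmax - 1) ∧
      mOPT n m k p c s ≤ T + s + pmax - 1 ∧
      T + s + pmax - 1 < 2 * T ∧
      2 * T ≤ 2 * mOPT n m k p c s := by
  have hp_le (j : Fin n) : p j ≤ pmax := hpmax ▸ le_sup (mem_univ j)
  have hpmax_pos : 1 ≤ pmax := (hp ⟨0, hn⟩).trans (hp_le _)
  have hT_ge : s + pmax ≤ T := hT ▸ le_max_left _ _
  have hceil_le (M : ℕ) : (k * s + ∑ j, p j + m - 1) / m ≤ M ↔ k * s + ∑ j, p j ≤ m * M := by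
    rw [Nat.div_le_iff_le_mul_add_pred hm]
    omega
  have hT_le (σ : Fin n → Fin m) : T ≤ mMakespan p c s σ :=
    hT ▸ max_le (hpmax ▸ add_sup_le_mMakespan p c s σ hn)
      ((hceil_le _).2 (mul_add_sum_le_mul_mMakespan p c s σ hc))
  obtain ⟨σ, hσ⟩ := exists_mMakespan_lt p c s hp hp_le (by omega)
    ((hceil_le T).1 (hT ▸ le_max_right _ _))
  obtain ⟨σopt, hσopt⟩ := exists_mMakespan_eq_mOPT p c s hm
  have hOPT_le := mOPT_le_mMakespan p c s σ
  have hT_le_OPT := hσopt ▸ hT_le σopt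
  exact ⟨⟨σ, by omega⟩, by omega, by omega, by omega⟩

/-- with `T = max(s + p_max, ⌈(k·s + ∑ p j)/m⌉)` there is a (greedy)
schedule with makespan at most `T + s + p_max - 1`; in particular
`OPT ≤ T + s + p_max - 1 < 2T ≤ 2·OPT`. -/
theorem greedy_two_approx (n m k s : ℕ) (hn : 1 ≤ n) (hm : 1 ≤ m) (hs : 1 ≤ s)
    (p : Fin n → ℕ) (hp : ∀ j, 1 ≤ p j)
    (c : Fin n → Fin k) (hc : Function.Surjective c)
    (pmax T : ℕ) (hpmax : pmax = univ.sup p)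
    (hT : T = max (s + pmax) ((k * s + ∑ j, p j + m - 1) / m)) :
    (∃ σ : Fin n → Fin m, mMakespan p c s σ ≤ T + s + pmax - 1) ∧
      mOPT n m k p c s ≤ T + s + pmax - 1 ∧
      T + s + pmax - 1 < 2 * T ∧
      2 * T ≤ 2 * mOPT n m k p c s :=
  greedy_two_approx_general n m k s hn hm p hp c hc pmax T hpmax hT
end

section
/- Let λ ≥ 1 be a natural number and let T : ℕ. Call a class γ tiny if λ · (∑_{j with c j = γ} p j) ≤ T. If σ is a block-schedule with makespan M, then there exists a block-schedule σ' such that λ · makespan(σ') ≤ λ·M + 2·T and, for every tiny class, all jobs of that class are assigned by σ' to a single machine. -/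
open Finset

/-- `σ` is a block-schedule w.r.t. classification `c`: for every machine index `i`
there is at most one class with some job on a machine of index `≤ i` and some job on
a machine of index `> i`. -/
def IsBlockSchedule {n m k : ℕ} (c : Fin n → Fin k) (σ : Fin n → Fin m) : Prop :=
  ∀ i : Fin m, ∀ γ₁ γ₂ : Fin k,
    ((∃ j, c j = γ₁ ∧ σ j ≤ i) ∧ (∃ j, c j = γ₁ ∧ i < σ j)) →
    ((∃ j, c j = γ₂ ∧ σ j ≤ i) ∧ (∃ j, c j = γ₂ ∧ i < σ j)) →
    γ₁ = γ₂

/-! Move every tiny class onto the leftmost machine it occupies. A moved class then sits on a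
single machine, so it crosses no machine boundary and the block structure survives; no machine
gets a new setup, since a moved class already had a job on its target machine. The jobs arriving
on machine `i` come from a class that crossed `i` in the old schedule, and a block-schedule has at
most one such class, so machine `i` gains the workload of at most one tiny class, i.e. at most
`T / L`. -/

variable {n m k : ℕ}

def classWork (p : Fin n → ℕ) (c : Fin n → Fin k) (γ : Fin k) : ℕ :=
  ∑ j ∈ univ.filter (fun j => c j = γ), p j

def CrossesMachine (c : Fin n → Fin k) (σ : Fin n → Fin m) (i : Fin m) (γ : Fin k) : Prop :=
  (∃ j, c j = γ ∧ σ j ≤ i) ∧ (∃ j, c j = γ ∧ i < σ j)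

section FirstMachine

variable (c : Fin n → Fin k) (σ : Fin n → Fin m)

/-- Indexed by a job rather than by its class, so that no default machine is needed for
classes without jobs. -/
def firstMachineOfClass (j : Fin n) : Fin m :=
  ((univ.filter fun j' => c j' = c j).image σ).min' ⟨σ j, mem_image_of_mem σ (by simp)⟩

variable {c σ}

theorem firstMachineOfClass_le {j j' : Fin n} (h : c j' = c j) :
    firstMachineOfClass c σ j ≤ σ j' :=
  min'_le _ _ (mem_image_of_mem σ (by simpa using h))

theorem exists_eq_firstMachineOfClass (j : Fin n) :
    ∃ j', c j' = c j ∧ σ j' = firstMachineOfClass c σ j := by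
  obtain ⟨j', hj', h⟩ := mem_image.1 (min'_mem ((univ.filter fun j' => c j' = c j).image σ)
    ⟨σ j, mem_image_of_mem σ (by simp)⟩)
  exact ⟨j', (mem_filter.1 hj').2, h⟩

theorem firstMachineOfClass_congr {j j' : Fin n} (h : c j = c j') :
    firstMachineOfClass c σ j = firstMachineOfClass c σ j' := by
  obtain ⟨i, hi, hσi⟩ := exists_eq_firstMachineOfClass (σ := σ) j
  obtain ⟨i', hi', hσi'⟩ := exists_eq_firstMachineOfClass (σ := σ) j'
  apply le_antisymm
  · rw [← hσi']
    exact firstMachineOfClass_le (hi'.trans h.symm)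
  · rw [← hσi]
    exact firstMachineOfClass_le (hi.trans h)

end FirstMachine

section Gather

variable (c : Fin n → Fin k) (σ : Fin n → Fin m) (S : Fin k → Prop) [DecidablePred S]

def gatherClasses (j : Fin n) : Fin m :=
  if S (c j) then firstMachineOfClass c σ j else σ j

variable {c σ S}

theorem gatherClasses_eq_of_class_eq {j j' : Fin n} (hS : S (c j)) (h : c j = c j') :
    gatherClasses c σ S j = gatherClasses c σ S j' := by
  simp only [gatherClasses, hS, ← h, if_true]
  exact firstMachineOfClass_congr h

theorem CrossesMachine.of_gatherClasses {i : Fin m} {γ : Fin k}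
    (h : CrossesMachine c (gatherClasses c σ S) i γ) : CrossesMachine c σ i γ := by
  obtain ⟨⟨j₁, rfl, hle⟩, ⟨j₂, hc, hlt⟩⟩ := h
  by_cases hS : S (c j₁)
  · rw [gatherClasses_eq_of_class_eq hS hc.symm] at hle
    exact absurd hlt (not_lt.2 hle)
  · rw [gatherClasses, if_neg hS] at hle
    rw [gatherClasses, hc, if_neg hS] at hlt
    exact ⟨⟨j₁, rfl, hle⟩, ⟨j₂, hc, hlt⟩⟩

theorem IsBlockSchedule.gatherClasses (hσ : IsBlockSchedule c σ) :
    IsBlockSchedule c (gatherClasses c σ S) := fun i _ _ h₁ h₂ =>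
  hσ i _ _ (CrossesMachine.of_gatherClasses h₁) (CrossesMachine.of_gatherClasses h₂)

theorem image_class_gatherClasses_subset (i : Fin m) :
    (univ.filter fun j => gatherClasses c σ S j = i).image c ⊆
      (univ.filter fun j => σ j = i).image c := by
  simp only [subset_iff, mem_image, mem_filter, mem_univ, true_and]
  rintro _ ⟨j, hj, rfl⟩
  by_cases hS : S (c j)
  · obtain ⟨j', hj', hσj'⟩ := exists_eq_firstMachineOfClass (σ := σ) j
    simp only [gatherClasses, hS, if_true] at hj
    exact ⟨j', hσj'.trans hj, hj'⟩
  · simp only [gatherClasses, hS, if_false] at hj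
    exact ⟨j, hj, rfl⟩

theorem crossesMachine_of_moved_to {i : Fin m} {j : Fin n}
    (hj : gatherClasses c σ S j = i) (hσj : σ j ≠ i) :
    S (c j) ∧ CrossesMachine c σ i (c j) := by
  by_cases hS : S (c j)
  · simp only [gatherClasses, hS, if_true] at hj
    obtain ⟨j', hj', hσj'⟩ := exists_eq_firstMachineOfClass (σ := σ) j
    exact ⟨hS, ⟨j', hj', (hσj'.trans hj).le⟩,
      ⟨j, rfl, lt_of_le_of_ne (hj ▸ firstMachineOfClass_le rfl) hσj.symm⟩⟩
  · simp only [gatherClasses, hS, if_false] at hj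
    exact absurd hj hσj

theorem mul_sum_moved_to_le (p : Fin n → ℕ) (L T : ℕ) (hσ : IsBlockSchedule c σ)
    (hS : ∀ γ, S γ → L * classWork p c γ ≤ T) (i : Fin m) :
    L * ∑ j ∈ univ.filter (fun j => gatherClasses c σ S j = i) \
      univ.filter (fun j => σ j = i), p j ≤ T := by
  set moved := univ.filter (fun j => gatherClasses c σ S j = i) \ univ.filter (fun j => σ j = i)
  have hmoved : ∀ j ∈ moved, S (c j) ∧ CrossesMachine c σ i (c j) := fun j hj => by
    simp only [moved, mem_sdiff, mem_filter, mem_univ, true_and] at hj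
    exact crossesMachine_of_moved_to hj.1 hj.2
  obtain he | ⟨j₀, hj₀⟩ := moved.eq_empty_or_nonempty
  · simp [he]
  -- in a block-schedule at most one class crosses machine `i`, so all moved jobs share a class
  have hsub : moved ⊆ univ.filter (fun j => c j = c j₀) := fun j hj =>
    mem_filter.2 ⟨mem_univ _, hσ i _ _ (hmoved j hj).2 (hmoved j₀ hj₀).2⟩
  calc L * ∑ j ∈ moved, p j ≤ L * classWork p c (c j₀) := by
        unfold classWork; gcongr
    _ ≤ T := hS _ (hmoved j₀ hj₀).1

theorem mul_mLoad_gatherClasses_le (p : Fin n → ℕ) (s L T : ℕ) (hσ : IsBlockSchedule c σ)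
    (hS : ∀ γ, S γ → L * classWork p c γ ≤ T) (i : Fin m) :
    L * mLoad p c s (gatherClasses c σ S) i ≤ L * mLoad p c s σ i + T := by
  set A := univ.filter (fun j => gatherClasses c σ S j = i)
  set B := univ.filter (fun j => σ j = i)
  have hwork : ∑ j ∈ A, p j ≤ ∑ j ∈ B, p j + ∑ j ∈ A \ B, p j := by
    rw [← sum_union disjoint_sdiff, union_sdiff_self_eq_union]
    exact sum_le_sum_of_subset subset_union_right
  have hsetup : (A.image c).card ≤ (B.image c).card :=
    card_le_card (image_class_gatherClasses_subset i)
  have hmoved : L * ∑ j ∈ A \ B, p j ≤ T := mul_sum_moved_to_le p L T hσ hS i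
  calc L * mLoad p c s (gatherClasses c σ S) i
      = L * ∑ j ∈ A, p j + L * (s * (A.image c).card) := mul_add _ _ _
    _ ≤ L * (∑ j ∈ B, p j + ∑ j ∈ A \ B, p j) + L * (s * (B.image c).card) := by gcongr
    _ = L * mLoad p c s σ i + L * ∑ j ∈ A \ B, p j := by rw [mLoad]; ring
    _ ≤ L * mLoad p c s σ i + T := by gcongr

end Gather

theorem mul_mMakespan_le_of_forall_mul_mLoad_le {p : Fin n → ℕ} {c : Fin n → Fin k} {s L T : ℕ}
    {σ σ' : Fin n → Fin m} (h : ∀ i, L * mLoad p c s σ' i ≤ L * mLoad p c s σ i + T) :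
    L * mMakespan p c s σ' ≤ L * mMakespan p c s σ + T := by
  rw [mMakespan, apply_sup_eq_sup_comp_of_linearOrder (L * ·) mul_right_mono
    (mul_zero L)]
  refine Finset.sup_le fun i _ => (h i).trans ?_
  gcongr
  exact le_sup (f := mLoad p c s σ) (mem_univ i)

theorem tiny_classes_on_one_machine_general (n m k s L T : ℕ)
    (p : Fin n → ℕ)
    (c : Fin n → Fin k)
    (σ : Fin n → Fin m) (hσ : IsBlockSchedule c σ) :
    ∃ σ' : Fin n → Fin m,
      IsBlockSchedule c σ' ∧
      L * mMakespan p c s σ' ≤ L * mMakespan p c s σ + 2 * T ∧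
      (∀ γ : Fin k, L * (∑ j ∈ univ.filter (fun j => c j = γ), p j) ≤ T →
        ∀ j j' : Fin n, c j = γ → c j' = γ → σ' j = σ' j') := by
  let tiny : Fin k → Prop := fun γ => L * classWork p c γ ≤ T
  refine ⟨gatherClasses c σ tiny, hσ.gatherClasses, ?_, ?_⟩
  · calc L * mMakespan p c s (gatherClasses c σ tiny) ≤ L * mMakespan p c s σ + T :=
          mul_mMakespan_le_of_forall_mul_mLoad_le
            (mul_mLoad_gatherClasses_le p s L T hσ (fun _ h => h))
      _ ≤ L * mMakespan p c s σ + 2 * T := by omega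
  · rintro γ hγ j j' rfl hj'
    exact gatherClasses_eq_of_class_eq (S := tiny) hγ hj'.symm

/-- given a block-schedule `σ`, there is a block-schedule `σ'` whose
makespan exceeds that of `σ` by at most `2T/L` (stated as
`L·makespan(σ') ≤ L·makespan(σ) + 2T`) and in which every tiny class
(`L · workload ≤ T`) is completely scheduled on a single machine. -/
theorem tiny_classes_on_one_machine (n m k s L T : ℕ)
    (hn : 1 ≤ n) (hm : 1 ≤ m) (hs : 1 ≤ s) (hL : 1 ≤ L)
    (p : Fin n → ℕ) (hp : ∀ j, 1 ≤ p j)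
    (c : Fin n → Fin k) (hc : Function.Surjective c)
    (σ : Fin n → Fin m) (hσ : IsBlockSchedule c σ) :
    ∃ σ' : Fin n → Fin m,
      IsBlockSchedule c σ' ∧
      L * mMakespan p c s σ' ≤ L * mMakespan p c s σ + 2 * T ∧
      (∀ γ : Fin k, L * (∑ j ∈ univ.filter (fun j => c j = γ), p j) ≤ T →
        ∀ j j' : Fin n, c j = γ → c j' = γ → σ' j = σ' j') :=
  tiny_classes_on_one_machine_general n m k s L T p c σ hσ
end
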